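/- PostQAL is closed under complementation, union, and intersection: if L, L₁, L₂ ⊆ Σ* belong to PostQAL, then so do Σ* \ L, L₁ ∪ L₂, and L₁ ∩ L₂. -/

import Mathlib

noncomputable section

/-- The input alphabet extended with the two endmarkers `¢` and `$`. -/
inductive ESym (α : Type) : Type where
  | cent : ESym α
  | dollar : ESym α
  | letter : α → ESym α

/-- The diagonal 0-1 projection matrix supported on a set of states. -/
def projM {m : ℕ} (S : Finset (Fin m)) : Matrix (Fin m) (Fin m) ℂ :=
  Matrix.diagonal (fun i => if i ∈ S then 1 else 0)

/-- The density matrix obtained by applying, in order, the Kraus families for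
`¢`, the letters of `w`, and `$` to the initial density matrix `|q₁⟩⟨q₁|`. -/
def qRun {α : Type} {n : ℕ} {k : ESym α → ℕ}
    (E : ∀ σ : ESym α, Fin (k σ) → Matrix (Fin (n + 1)) (Fin (n + 1)) ℂ)
    (w : List α) : Matrix (Fin (n + 1)) (Fin (n + 1)) ℂ :=
  (ESym.cent :: (w.map ESym.letter ++ [ESym.dollar])).foldl
    (fun ρ σ => ∑ i : Fin (k σ), E σ i * ρ * (E σ i).conjTranspose)
    (Matrix.single 0 0 1)

/-- A real-time quantum finite automaton with postselection (RT-PostQFA). -/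
structure PostQFA (α : Type) where
  n : ℕ
  k : ESym α → ℕ
  E : ∀ σ : ESym α, Fin (k σ) → Matrix (Fin (n + 1)) (Fin (n + 1)) ℂ
  kraus : ∀ σ : ESym α, ∑ i : Fin (k σ), (E σ i).conjTranspose * E σ i = 1
  Qpa : Finset (Fin (n + 1))
  Qpr : Finset (Fin (n + 1))
  disj : Disjoint Qpa Qpr
  postPos : ∀ w : List α,
    0 < ((projM Qpa * qRun E w).trace).re + ((projM Qpr * qRun E w).trace).re

/-- Acceptance probability before postselection. -/
def PostQFA.pacc {α : Type} (M : PostQFA α) (w : List α) : ℝ :=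
  ((projM M.Qpa * qRun M.E w).trace).re

/-- Rejection probability before postselection. -/
def PostQFA.prej {α : Type} (M : PostQFA α) (w : List α) : ℝ :=
  ((projM M.Qpr * qRun M.E w).trace).re

/-- Normalized acceptance probability of an RT-PostQFA. -/
def PostQFA.fa {α : Type} (M : PostQFA α) (w : List α) : ℝ :=
  M.pacc w / (M.pacc w + M.prej w)

/-- Recognition of a language with error bound `ε`. -/
def PostQFA.Recognizes {α : Type} (M : PostQFA α) (L : Set (List α)) (ε : ℝ) : Prop :=
  ∀ w : List α, (w ∈ L → 1 - ε ≤ M.fa w) ∧ (w ∉ L → M.fa w ≤ ε)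

/-- The class of languages recognized by RT-PostQFAs with bounded error. -/
def PostQAL {α : Type} (L : Set (List α)) : Prop :=
  ∃ (M : PostQFA α) (ε : ℝ), 0 ≤ ε ∧ ε < 1 / 2 ∧ M.Recognizes L ε

/-- Recognition with zero error: `fa = 1` on members, `fa = 0` on non-members. -/
def PostQFA.RecognizesZero {α : Type} (M : PostQFA α) (L : Set (List α)) : Prop :=
  ∀ w : List α, (w ∈ L → M.fa w = 1) ∧ (w ∉ L → M.fa w = 0)

/-- The class of languages recognized by RT-PostQFAs with zero error. -/
def ZPostQAL {α : Type} (L : Set (List α)) : Prop :=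
  ∃ M : PostQFA α, M.RecognizesZero L


/-!
Complementation exchanges the accepting and rejecting states. For intersection, two machines
run in parallel on the tensor product of their state spaces and accept exactly when both
accept; after postselection the acceptance probability is `f₁ · f₂`, which separates
`L₁ ∩ L₂` once both errors are small. The errors are made small by running two copies of one
machine in parallel and postselecting on agreement: this squares the odds `pᵃ / pʳ`, turning
error `ε` into at most `2 ε²`. Union follows by De Morgan.
-/

open Matrix
open scoped Kronecker ComplexOrder

lemma trace_projM_mul {m : ℕ} (S : Finset (Fin m)) (ρ : Matrix (Fin m) (Fin m) ℂ) :
    (projM S * ρ).trace = ∑ i ∈ S, ρ i i := by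
  simp [projM, Matrix.trace, diagonal_mul, ite_mul, Finset.sum_ite_mem]

lemma trace_projM_mul_nonneg {m : ℕ} (S : Finset (Fin m)) {ρ : Matrix (Fin m) (Fin m) ℂ}
    (hρ : ρ.PosSemidef) : 0 ≤ (projM S * ρ).trace := by
  rw [trace_projM_mul]
  exact Finset.sum_nonneg fun i _ => hρ.diag_nonneg

lemma qRun_posSemidef {α : Type} {n : ℕ} {k : ESym α → ℕ}
    (E : ∀ σ : ESym α, Fin (k σ) → Matrix (Fin (n + 1)) (Fin (n + 1)) ℂ) (w : List α) :
    (qRun E w).PosSemidef := by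
  suffices ∀ (l : List (ESym α)) (ρ : Matrix (Fin (n + 1)) (Fin (n + 1)) ℂ), ρ.PosSemidef →
      (l.foldl (fun ρ σ => ∑ i : Fin (k σ), E σ i * ρ * (E σ i)ᴴ) ρ).PosSemidef by
    refine this _ _ ?_
    rw [← diagonal_single]
    exact PosSemidef.diagonal (Pi.single_nonneg.mpr zero_le_one)
  intro l
  induction l with
  | nil => exact fun _ h => h
  | cons σ l ih =>
    exact fun ρ hρ => ih _ (posSemidef_sum _ fun i _ => hρ.mul_mul_conjTranspose_same _)

def runProb {α : Type} {n : ℕ} {k : ESym α → ℕ}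
    (E : ∀ σ : ESym α, Fin (k σ) → Matrix (Fin (n + 1)) (Fin (n + 1)) ℂ)
    (S : Finset (Fin (n + 1))) (w : List α) : ℝ :=
  ((projM S * qRun E w).trace).re

section runProb

variable {α : Type} {n : ℕ} {k : ESym α → ℕ}
  (E : ∀ σ : ESym α, Fin (k σ) → Matrix (Fin (n + 1)) (Fin (n + 1)) ℂ)

lemma runProb_nonneg (S : Finset (Fin (n + 1))) (w : List α) : 0 ≤ runProb E S w :=
  (Complex.nonneg_iff.mp (trace_projM_mul_nonneg S (qRun_posSemidef E w))).1

lemma runProb_union {S T : Finset (Fin (n + 1))} (h : Disjoint S T) (w : List α) :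
    runProb E (S ∪ T) w = runProb E S w + runProb E T w := by
  simp only [runProb, trace_projM_mul, Finset.sum_union h, Complex.add_re]

end runProb

section Tensor

lemma sum_kronecker_sum {ι κ l m n p : Type*} [Fintype ι] [Fintype κ]
    (A : ι → Matrix l m ℂ) (B : κ → Matrix n p ℂ) :
    (∑ i, A i) ⊗ₖ (∑ j, B j) = ∑ x : ι × κ, A x.1 ⊗ₖ B x.2 := by
  ext
  simp [kroneckerMap_apply, Matrix.sum_apply, Finset.sum_mul_sum, Fintype.sum_prod_type]

/-- States of a `PostQFA` must form some `Fin (n + 1)`. -/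
def prodStateEquiv (n₁ n₂ : ℕ) : Fin (n₁ + 1) × Fin (n₂ + 1) ≃ Fin (n₁ * n₂ + n₁ + n₂ + 1) :=
  finProdFinEquiv.trans (finCongr (by ring))

lemma prodStateEquiv_zero (n₁ n₂ : ℕ) : prodStateEquiv n₁ n₂ (0, 0) = 0 := by
  ext
  simp [prodStateEquiv]

variable {α : Type} {n₁ n₂ : ℕ} {k₁ k₂ : ESym α → ℕ}
  (E₁ : ∀ σ : ESym α, Fin (k₁ σ) → Matrix (Fin (n₁ + 1)) (Fin (n₁ + 1)) ℂ)
  (E₂ : ∀ σ : ESym α, Fin (k₂ σ) → Matrix (Fin (n₂ + 1)) (Fin (n₂ + 1)) ℂ)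

def prodReindex : Matrix (Fin (n₁ + 1) × Fin (n₂ + 1)) (Fin (n₁ + 1) × Fin (n₂ + 1)) ℂ ≃ₐ[ℂ]
    Matrix (Fin (n₁ * n₂ + n₁ + n₂ + 1)) (Fin (n₁ * n₂ + n₁ + n₂ + 1)) ℂ :=
  reindexAlgEquiv ℂ ℂ (prodStateEquiv n₁ n₂)

lemma conjTranspose_prodReindex
    (A : Matrix (Fin (n₁ + 1) × Fin (n₂ + 1)) (Fin (n₁ + 1) × Fin (n₂ + 1)) ℂ) :
    (prodReindex A)ᴴ = prodReindex Aᴴ :=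
  rfl

def tensorKraus (σ : ESym α) (i : Fin (k₁ σ * k₂ σ)) :
    Matrix (Fin (n₁ * n₂ + n₁ + n₂ + 1)) (Fin (n₁ * n₂ + n₁ + n₂ + 1)) ℂ :=
  prodReindex (E₁ σ (finProdFinEquiv.symm i).1 ⊗ₖ E₂ σ (finProdFinEquiv.symm i).2)

lemma sum_tensorKraus {β : Type*} [AddCommMonoid β] (σ : ESym α)
    (f : Matrix (Fin (n₁ * n₂ + n₁ + n₂ + 1)) (Fin (n₁ * n₂ + n₁ + n₂ + 1)) ℂ → β) :
    ∑ i, f (tensorKraus E₁ E₂ σ i) = ∑ x : Fin (k₁ σ) × Fin (k₂ σ),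
      f (prodReindex (E₁ σ x.1 ⊗ₖ E₂ σ x.2)) := by
  rw [← finProdFinEquiv.sum_comp]
  simp [tensorKraus]

lemma tensorKraus_complete
    (h₁ : ∀ σ, ∑ i, (E₁ σ i)ᴴ * E₁ σ i = 1) (h₂ : ∀ σ, ∑ i, (E₂ σ i)ᴴ * E₂ σ i = 1)
    (σ : ESym α) : ∑ i, (tensorKraus E₁ E₂ σ i)ᴴ * tensorKraus E₁ E₂ σ i = 1 := by
  rw [sum_tensorKraus E₁ E₂ σ fun K => Kᴴ * K]
  simp only [conjTranspose_prodReindex, ← map_mul, ← map_sum, conjTranspose_kronecker,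
    ← mul_kronecker_mul]
  rw [← sum_kronecker_sum (fun i => (E₁ σ i)ᴴ * E₁ σ i) (fun j => (E₂ σ j)ᴴ * E₂ σ j), h₁, h₂,
    one_kronecker_one, map_one]

lemma tensorKraus_step (σ : ESym α) (ρ₁ : Matrix (Fin (n₁ + 1)) (Fin (n₁ + 1)) ℂ)
    (ρ₂ : Matrix (Fin (n₂ + 1)) (Fin (n₂ + 1)) ℂ) :
    ∑ i, tensorKraus E₁ E₂ σ i * prodReindex (ρ₁ ⊗ₖ ρ₂) * (tensorKraus E₁ E₂ σ i)ᴴ =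
      prodReindex ((∑ i, E₁ σ i * ρ₁ * (E₁ σ i)ᴴ) ⊗ₖ (∑ j, E₂ σ j * ρ₂ * (E₂ σ j)ᴴ)) := by
  rw [sum_tensorKraus E₁ E₂ σ fun K => K * prodReindex (ρ₁ ⊗ₖ ρ₂) * Kᴴ]
  simp only [conjTranspose_prodReindex, ← map_mul, ← map_sum, conjTranspose_kronecker,
    ← mul_kronecker_mul, sum_kronecker_sum]

lemma foldl_tensorKraus (l : List (ESym α)) (ρ₁ : Matrix (Fin (n₁ + 1)) (Fin (n₁ + 1)) ℂ)
    (ρ₂ : Matrix (Fin (n₂ + 1)) (Fin (n₂ + 1)) ℂ) :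
    l.foldl (fun ρ σ => ∑ i, tensorKraus E₁ E₂ σ i * ρ * (tensorKraus E₁ E₂ σ i)ᴴ)
        (prodReindex (ρ₁ ⊗ₖ ρ₂)) =
      prodReindex (l.foldl (fun ρ σ => ∑ i, E₁ σ i * ρ * (E₁ σ i)ᴴ) ρ₁ ⊗ₖ
        l.foldl (fun ρ σ => ∑ i, E₂ σ i * ρ * (E₂ σ i)ᴴ) ρ₂) := by
  induction l generalizing ρ₁ ρ₂ with
  | nil => rfl
  | cons σ l ih => simp only [List.foldl_cons, tensorKraus_step, ih]

lemma qRun_tensorKraus (w : List α) :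
    qRun (tensorKraus E₁ E₂) w = prodReindex (qRun E₁ w ⊗ₖ qRun E₂ w) := by
  have hinit : (single 0 0 1 : Matrix (Fin (n₁ * n₂ + n₁ + n₂ + 1)) _ ℂ) =
      prodReindex (single 0 0 1 ⊗ₖ single 0 0 1) := by
    simp only [prodReindex, coe_reindexAlgEquiv, reindex_apply, single_kronecker_single,
      submatrix_single_equiv, Equiv.symm_symm, prodStateEquiv_zero, mul_one]
  rw [qRun, hinit, foldl_tensorKraus]
  rfl

def tensorSet (S₁ : Finset (Fin (n₁ + 1))) (S₂ : Finset (Fin (n₂ + 1))) :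
    Finset (Fin (n₁ * n₂ + n₁ + n₂ + 1)) :=
  (S₁ ×ˢ S₂).map (prodStateEquiv n₁ n₂).toEmbedding

lemma disjoint_tensorSet_of_left {S₁ T₁ : Finset (Fin (n₁ + 1))} (h : Disjoint S₁ T₁)
    (S₂ T₂ : Finset (Fin (n₂ + 1))) : Disjoint (tensorSet S₁ S₂) (tensorSet T₁ T₂) := by
  rw [tensorSet, tensorSet, Finset.disjoint_map, Finset.disjoint_product]
  exact Or.inl h

lemma disjoint_tensorSet_of_right (S₁ T₁ : Finset (Fin (n₁ + 1)))
    {S₂ T₂ : Finset (Fin (n₂ + 1))} (h : Disjoint S₂ T₂) :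
    Disjoint (tensorSet S₁ S₂) (tensorSet T₁ T₂) := by
  rw [tensorSet, tensorSet, Finset.disjoint_map, Finset.disjoint_product]
  exact Or.inr h

lemma trace_projM_tensorSet_mul (S₁ : Finset (Fin (n₁ + 1))) (S₂ : Finset (Fin (n₂ + 1)))
    (ρ₁ : Matrix (Fin (n₁ + 1)) (Fin (n₁ + 1)) ℂ) (ρ₂ : Matrix (Fin (n₂ + 1)) (Fin (n₂ + 1)) ℂ) :
    (projM (tensorSet S₁ S₂) * prodReindex (ρ₁ ⊗ₖ ρ₂)).trace =
      (projM S₁ * ρ₁).trace * (projM S₂ * ρ₂).trace := by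
  simp only [trace_projM_mul, tensorSet, Finset.sum_map, Finset.sum_mul_sum, ← Finset.sum_product']
  simp [prodReindex]

lemma runProb_tensorKraus (S₁ : Finset (Fin (n₁ + 1))) (S₂ : Finset (Fin (n₂ + 1)))
    (w : List α) :
    runProb (tensorKraus E₁ E₂) (tensorSet S₁ S₂) w = runProb E₁ S₁ w * runProb E₂ S₂ w := by
  have h₂ := trace_projM_mul_nonneg S₂ (qRun_posSemidef E₂ w)
  rw [runProb, qRun_tensorKraus, trace_projM_tensorSet_mul, Complex.mul_re,
    ← (Complex.nonneg_iff.mp h₂).2, mul_zero, sub_zero]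
  rfl

end Tensor

lemma one_sub_two_mul_sq_mul_sq_le {ε x y : ℝ} (hε : ε ≤ 1) (hx : 0 ≤ x)
    (h : (1 - ε) * x ≤ ε * y) : (1 - 2 * ε ^ 2) * x ^ 2 ≤ 2 * ε ^ 2 * y ^ 2 := by
  have hsq : ((1 - ε) * x) ^ 2 ≤ (ε * y) ^ 2 :=
    pow_le_pow_left₀ (mul_nonneg (sub_nonneg.mpr hε) hx) h 2
  nlinarith [mul_nonneg (sq_nonneg (1 - 2 * ε)) (sq_nonneg x)]

namespace PostQFA

variable {α : Type}

section Probabilities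

variable (M : PostQFA α) (w : List α)

lemma pacc_nonneg : 0 ≤ M.pacc w := runProb_nonneg M.E M.Qpa w

lemma prej_nonneg : 0 ≤ M.prej w := runProb_nonneg M.E M.Qpr w

lemma pacc_add_prej_pos : 0 < M.pacc w + M.prej w := M.postPos w

lemma fa_nonneg : 0 ≤ M.fa w :=
  div_nonneg (M.pacc_nonneg w) (M.pacc_add_prej_pos w).le

lemma fa_le_one : M.fa w ≤ 1 :=
  div_le_one_of_le₀ (le_add_of_nonneg_right (M.prej_nonneg w)) (M.pacc_add_prej_pos w).le

lemma one_sub_le_fa_iff (ε : ℝ) : 1 - ε ≤ M.fa w ↔ (1 - ε) * M.prej w ≤ ε * M.pacc w := by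
  rw [fa, le_div_iff₀ (M.pacc_add_prej_pos w)]
  constructor <;> intro h <;> linarith

lemma fa_le_iff (ε : ℝ) : M.fa w ≤ ε ↔ (1 - ε) * M.pacc w ≤ ε * M.prej w := by
  rw [fa, div_le_iff₀ (M.pacc_add_prej_pos w)]
  constructor <;> intro h <;> linarith

end Probabilities

lemma Recognizes.mono {M : PostQFA α} {L : Set (List α)} {ε δ : ℝ} (h : M.Recognizes L ε)
    (hεδ : ε ≤ δ) : M.Recognizes L δ :=
  fun w => ⟨fun hw => by linarith [(h w).1 hw], fun hw => by linarith [(h w).2 hw]⟩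

def compl (M : PostQFA α) : PostQFA α where
  n := M.n
  k := M.k
  E := M.E
  kraus := M.kraus
  Qpa := M.Qpr
  Qpr := M.Qpa
  disj := M.disj.symm
  postPos w := by linarith [M.postPos w]

lemma compl_fa (M : PostQFA α) (w : List α) : M.compl.fa w = 1 - M.fa w := by
  change M.prej w / (M.prej w + M.pacc w) = 1 - M.fa w
  rw [eq_sub_iff_add_eq, fa, add_comm (M.prej w), ← add_div, add_comm (M.prej w),
    div_self (M.pacc_add_prej_pos w).ne']

lemma Recognizes.compl {M : PostQFA α} {L : Set (List α)} {ε : ℝ} (h : M.Recognizes L ε) :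
    M.compl.Recognizes Lᶜ ε := fun w =>
  ⟨fun hw => by linarith [M.compl_fa w, (h w).2 hw],
    fun hw => by linarith [M.compl_fa w, (h w).1 (Set.notMem_compl_iff.mp hw)]⟩

def square (M : PostQFA α) : PostQFA α where
  n := M.n * M.n + M.n + M.n
  k σ := M.k σ * M.k σ
  E := tensorKraus M.E M.E
  kraus := tensorKraus_complete M.E M.E M.kraus M.kraus
  Qpa := tensorSet M.Qpa M.Qpa
  Qpr := tensorSet M.Qpr M.Qpr
  disj := disjoint_tensorSet_of_left M.disj _ _
  postPos w := by
    change 0 < runProb _ _ w + runProb _ _ w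
    rw [runProb_tensorKraus, runProb_tensorKraus]
    change 0 < M.pacc w * M.pacc w + M.prej w * M.prej w
    have hpos := M.pacc_add_prej_pos w
    nlinarith [mul_pos hpos hpos, sq_nonneg (M.pacc w - M.prej w)]

lemma square_pacc (M : PostQFA α) (w : List α) : M.square.pacc w = M.pacc w ^ 2 :=
  (runProb_tensorKraus M.E M.E _ _ w).trans (sq _).symm

lemma square_prej (M : PostQFA α) (w : List α) : M.square.prej w = M.prej w ^ 2 :=
  (runProb_tensorKraus M.E M.E _ _ w).trans (sq _).symm

lemma Recognizes.square {M : PostQFA α} {L : Set (List α)} {ε : ℝ} (h : M.Recognizes L ε)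
    (hε : ε ≤ 1) : M.square.Recognizes L (2 * ε ^ 2) := by
  intro w
  simp only [one_sub_le_fa_iff, fa_le_iff, square_pacc, square_prej]
  exact ⟨fun hw => one_sub_two_mul_sq_mul_sq_le hε (M.prej_nonneg w)
      ((M.one_sub_le_fa_iff w ε).mp ((h w).1 hw)),
    fun hw => one_sub_two_mul_sq_mul_sq_le hε (M.pacc_nonneg w)
      ((M.fa_le_iff w ε).mp ((h w).2 hw))⟩

lemma Recognizes.iterate_square {M : PostQFA α} {L : Set (List α)} {ε : ℝ}
    (h : M.Recognizes L ε) (h₀ : 0 ≤ ε) (h₁ : 2 * ε ≤ 1) (m : ℕ) :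
    (PostQFA.square^[m] M).Recognizes L (ε * (2 * ε) ^ m) := by
  induction m with
  | zero => simpa using h
  | succ m ih =>
    have hpow : (2 * ε) ^ m ≤ 1 := pow_le_one₀ (by linarith) h₁
    rw [Function.iterate_succ_apply']
    refine (ih.square (by nlinarith)).mono ?_
    calc 2 * (ε * (2 * ε) ^ m) ^ 2 = ε * (2 * ε) ^ (m + 1) * (2 * ε) ^ m := by ring
      _ ≤ ε * (2 * ε) ^ (m + 1) := mul_le_of_le_one_right (by positivity) hpow

lemma runProb_tensorKraus_interReject (M₁ M₂ : PostQFA α) (w : List α) :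
    runProb (tensorKraus M₁.E M₂.E)
        (tensorSet M₁.Qpr (M₂.Qpa ∪ M₂.Qpr) ∪ tensorSet M₁.Qpa M₂.Qpr) w =
      M₁.prej w * (M₂.pacc w + M₂.prej w) + M₁.pacc w * M₂.prej w := by
  rw [runProb_union _ (disjoint_tensorSet_of_left M₁.disj.symm _ _), runProb_tensorKraus,
    runProb_tensorKraus, runProb_union _ M₂.disj]
  rfl

def inter (M₁ M₂ : PostQFA α) : PostQFA α where
  n := M₁.n * M₂.n + M₁.n + M₂.n
  k σ := M₁.k σ * M₂.k σ
  E := tensorKraus M₁.E M₂.E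
  kraus := tensorKraus_complete M₁.E M₂.E M₁.kraus M₂.kraus
  Qpa := tensorSet M₁.Qpa M₂.Qpa
  Qpr := tensorSet M₁.Qpr (M₂.Qpa ∪ M₂.Qpr) ∪ tensorSet M₁.Qpa M₂.Qpr
  disj := Finset.disjoint_union_right.mpr
    ⟨disjoint_tensorSet_of_left M₁.disj _ _, disjoint_tensorSet_of_right _ _ M₂.disj⟩
  postPos w := by
    change 0 < runProb _ _ w + runProb _ _ w
    rw [runProb_tensorKraus, runProb_tensorKraus_interReject]
    change 0 < M₁.pacc w * M₂.pacc w + _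
    linarith [mul_pos (M₁.pacc_add_prej_pos w) (M₂.pacc_add_prej_pos w)]

lemma inter_fa (M₁ M₂ : PostQFA α) (w : List α) : (M₁.inter M₂).fa w = M₁.fa w * M₂.fa w := by
  have hpacc : (M₁.inter M₂).pacc w = M₁.pacc w * M₂.pacc w := runProb_tensorKraus _ _ _ _ w
  have hprej : (M₁.inter M₂).prej w =
      M₁.prej w * (M₂.pacc w + M₂.prej w) + M₁.pacc w * M₂.prej w :=
    runProb_tensorKraus_interReject M₁ M₂ w
  rw [fa, fa, fa, hpacc, hprej, div_mul_div_comm]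
  congr 1
  ring

lemma Recognizes.inter {M₁ M₂ : PostQFA α} {L₁ L₂ : Set (List α)} {ε₁ ε₂ : ℝ}
    (h₁ : M₁.Recognizes L₁ ε₁) (h₂ : M₂.Recognizes L₂ ε₂) (hε₁ : 0 ≤ ε₁) (hε₂ : 0 ≤ ε₂) :
    (M₁.inter M₂).Recognizes (L₁ ∩ L₂) (ε₁ + ε₂) := by
  intro w
  rw [inter_fa]
  have h₁₀ := M₁.fa_nonneg w
  have h₂₀ := M₂.fa_nonneg w
  have h₁₁ := M₁.fa_le_one w
  have h₂₁ := M₂.fa_le_one w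
  refine ⟨fun hw => ?_, fun hw => ?_⟩
  · nlinarith [(h₁ w).1 hw.1, (h₂ w).1 hw.2]
  · rcases not_and_or.mp hw with hw | hw
    · nlinarith [(h₁ w).2 hw]
    · nlinarith [(h₂ w).2 hw]

end PostQFA

namespace PostQAL

variable {α : Type}

lemma compl {L : Set (List α)} (h : PostQAL L) : PostQAL Lᶜ := by
  obtain ⟨M, ε, h₀, h₁, hM⟩ := h
  exact ⟨M.compl, ε, h₀, h₁, hM.compl⟩

lemma exists_recognizes_le {L : Set (List α)} (h : PostQAL L) {δ : ℝ} (hδ : 0 < δ) :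
    ∃ (M : PostQFA α) (ε : ℝ), 0 ≤ ε ∧ ε ≤ δ ∧ M.Recognizes L ε := by
  obtain ⟨M, ε, h₀, h₁, hM⟩ := h
  obtain ⟨m, hm⟩ := exists_pow_lt_of_lt_one hδ (by linarith : 2 * ε < 1)
  refine ⟨PostQFA.square^[m] M, ε * (2 * ε) ^ m, by positivity, ?_,
    hM.iterate_square h₀ (by linarith) m⟩
  calc ε * (2 * ε) ^ m ≤ (2 * ε) ^ m := mul_le_of_le_one_left (by positivity) (by linarith)
    _ ≤ δ := hm.le

lemma inter {L₁ L₂ : Set (List α)} (h₁ : PostQAL L₁) (h₂ : PostQAL L₂) :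
    PostQAL (L₁ ∩ L₂) := by
  obtain ⟨M₁, ε₁, h₁₀, h₁₁, hM₁⟩ := h₁.exists_recognizes_le (δ := 1 / 8) (by norm_num)
  obtain ⟨M₂, ε₂, h₂₀, h₂₁, hM₂⟩ := h₂.exists_recognizes_le (δ := 1 / 8) (by norm_num)
  exact ⟨M₁.inter M₂, ε₁ + ε₂, by positivity, by linarith, hM₁.inter hM₂ h₁₀ h₂₀⟩

lemma union {L₁ L₂ : Set (List α)} (h₁ : PostQAL L₁) (h₂ : PostQAL L₂) :
    PostQAL (L₁ ∪ L₂) := by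
  simpa [Set.compl_inter] using (h₁.compl.inter h₂.compl).compl

end PostQAL

theorem PostQAL_closure_general {α : Type} (L L₁ L₂ : Set (List α))
    (hL : PostQAL L) (h₁ : PostQAL L₁) (h₂ : PostQAL L₂) :
    PostQAL Lᶜ ∧ PostQAL (L₁ ∪ L₂) ∧ PostQAL (L₁ ∩ L₂) :=
  ⟨hL.compl, h₁.union h₂, h₁.inter h₂⟩

/-- `PostQAL` is closed under complementation, union, and intersection. -/
theorem PostQAL_closure {α : Type} [Fintype α] (L L₁ L₂ : Set (List α))
    (hL : PostQAL L) (h₁ : PostQAL L₁) (h₂ : PostQAL L₂) :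
    PostQAL Lᶜ ∧ PostQAL (L₁ ∪ L₂) ∧ PostQAL (L₁ ∩ L₂) :=
  PostQAL_closure_general L L₁ L₂ hL h₁ h₂
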